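/- arXiv:2305.06322 — 11 statements merged into one kernel-verified Lean document; each statement's English description precedes it below -/
import Mathlib

section
/- If α, β ∈ F_{q²} satisfy α^{q+1} ≠ β^{q+1}, then the map X ↦ (β^q X + α^q)/(αX + β) permutes μ_{q+1}, the set of (q+1)-th roots of unity in F_{q²}. -/
theorem stmt2 (q : ℕ) (F : Type*) [Field F] [Fintype F]
    (hF : Fintype.card F = q ^ 2)
    (α β : F) (h : α ^ (q + 1) ≠ β ^ (q + 1)) :
    Set.BijOn (fun x : F => (β ^ q * x + α ^ q) / (α * x + β))
      {x : F | x ^ (q + 1) = 1} {x : F | x ^ (q + 1) = 1} := by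
  -- q is a power of the characteristic
  set p := ringChar F with hp
  obtain ⟨n, hpprime, hcard⟩ := FiniteField.card F p
  have hq2 : q ^ 2 = p ^ (n : ℕ) := hF ▸ hcard
  obtain ⟨m, hmn, hqm⟩ := (Nat.dvd_prime_pow hpprime).1 (hq2 ▸ dvd_pow_self q two_ne_zero)
  haveI : CharP F p := ringChar.charP F
  haveI : ExpChar F p := ExpChar.prime hpprime
  -- Frobenius additivity
  have frob : ∀ a b : F, (a + b) ^ q = a ^ q + b ^ q := by
    intro a b; rw [hqm]; exact add_pow_expChar_pow a b p m
  -- q^2-th power is identity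
  have pw : ∀ a : F, (a ^ q) ^ q = a := by
    intro a
    rw [← pow_mul, ← sq, ← hF, FiniteField.pow_card]
  -- (-1)^(q+1) = 1
  have hneg : ((-1 : F)) ^ (q + 1) = 1 := by
    rcases eq_or_ne p 2 with h2 | h2
    · haveI : CharP F 2 := h2 ▸ ringChar.charP F
      rw [CharTwo.neg_eq, one_pow]
    · have hodd : Odd q := by
        rw [hqm]; exact (hpprime.odd_of_ne_two h2).pow
      exact (Odd.add_one hodd).neg_one_pow
  -- denominators are nonzero
  have hx0 : ∀ x : F, x ^ (q + 1) = 1 → x ≠ 0 := by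
    rintro x hx rfl
    simp [zero_pow] at hx
  have hden : ∀ x : F, x ^ (q + 1) = 1 → α * x + β ≠ 0 := by
    intro x hx hd
    have hβ : β = -(α * x) := by linear_combination hd
    apply h
    rw [hβ, neg_eq_neg_one_mul, mul_pow, hneg, one_mul, mul_pow, hx, mul_one]
  -- key: numerator^(q+1) = denominator^(q+1) on the set
  have maps : Set.MapsTo (fun x : F => (β ^ q * x + α ^ q) / (α * x + β))
      {x : F | x ^ (q + 1) = 1} {x : F | x ^ (q + 1) = 1} := by
    intro x hx
    simp only [Set.mem_setOf_eq] at hx ⊢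
    have hd := hden x hx
    have e1 : (β ^ q * x + α ^ q) ^ q = β * x ^ q + α := by
      rw [frob, mul_pow, pw, pw]
    have e2 : (α * x + β) ^ q = α ^ q * x ^ q + β ^ q := by
      rw [frob, mul_pow]
    have key : (β ^ q * x + α ^ q) ^ (q + 1) = (α * x + β) ^ (q + 1) := by
      rw [pow_succ, pow_succ, e1, e2]
      linear_combination (β ^ q * β - α ^ q * α) * hx
    rw [div_pow, key, div_self (pow_ne_zero _ hd)]
  have inj : Set.InjOn (fun x : F => (β ^ q * x + α ^ q) / (α * x + β))
      {x : F | x ^ (q + 1) = 1} := by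
    intro x hx y hy hxy
    simp only [Set.mem_setOf_eq] at hx hy
    have hdx := hden x hx
    have hdy := hden y hy
    simp only at hxy
    rw [div_eq_div_iff hdx hdy] at hxy
    have : (β ^ q * β - α ^ q * α) * (x - y) = 0 := by linear_combination hxy
    rcases mul_eq_zero.1 this with h1 | h1
    · exact absurd (by linear_combination h1) (Ne.symm h)
    · exact sub_eq_zero.1 h1
  exact ((Set.toFinite _).injOn_iff_bijOn_of_mapsTo maps).1 inj
end

section
/- If α ∈ F_{q²} \ F_q and β ∈ μ_{q+1}, then the map X ↦ (αX + βα^q)/(X + β) maps μ_{q+1} bijectively onto P¹(F_q) = F_q ∪ {∞}, where the value at X = -β is taken to be ∞. -/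
theorem stmt3 (q : ℕ) (F : Type*) [Field F] [Fintype F] [DecidableEq F]
    (hF : Fintype.card F = q ^ 2)
    (α β : F) (hα : α ^ q ≠ α) (hβ : β ^ (q + 1) = 1) :
    Set.BijOn
      (fun x : F => if x + β = 0 then (none : Option F)
        else some ((α * x + β * α ^ q) / (x + β)))
      {x : F | x ^ (q + 1) = 1}
      (insert none (Option.some '' {y : F | y ^ q = y})) := by
  obtain ⟨p, hp⟩ := CharP.exists F
  haveI := hp
  obtain ⟨n, hpp, hcard⟩ := FiniteField.card F p
  haveI := Fact.mk hpp
  have hqdvd : q ∣ p ^ (n : ℕ) := by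
    rw [← hcard, hF]; exact dvd_pow_self q two_ne_zero
  obtain ⟨m, hmn, hqm⟩ := (Nat.dvd_prime_pow hpp).mp hqdvd
  have hadd : ∀ x y : F, (x + y) ^ q = x ^ q + y ^ q := by
    intro x y; rw [hqm]; exact add_pow_char_pow x y p m
  have hsub : ∀ x y : F, (x - y) ^ q = x ^ q - y ^ q := by
    intro x y
    have h := hadd (x - y) y
    rw [sub_add_cancel] at h
    exact eq_sub_of_add_eq h.symm
  have hqq : ∀ x : F, (x ^ q) ^ q = x := by
    intro x; rw [← pow_mul, ← pow_two, ← hF, FiniteField.pow_card]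
  have hβ0 : β ≠ 0 := by
    intro h; rw [h, zero_pow (Nat.succ_ne_zero q)] at hβ; exact zero_ne_one hβ
  have hβq : β ^ q * β = 1 := by rw [← pow_succ]; exact hβ
  have hαα : α - α ^ q ≠ 0 := sub_ne_zero_of_ne (Ne.symm hα)
  refine ⟨?_, ?_, ?_⟩
  · -- MapsTo
    intro x hx
    simp only [Set.mem_setOf_eq] at hx
    by_cases h : x + β = 0
    · simp [h]
    · have hx0 : x ≠ 0 := by
        intro h0; rw [h0, zero_pow (Nat.succ_ne_zero q)] at hx; exact zero_ne_one hx
      have hxq : x ^ q * x = 1 := by rw [← pow_succ]; exact hx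
      have hxi : x ^ q = x⁻¹ := eq_inv_of_mul_eq_one_left hxq
      have hβi : β ^ q = β⁻¹ := eq_inv_of_mul_eq_one_left hβq
      simp only [if_neg h]
      refine Set.mem_insert_of_mem _ ⟨_, ?_, rfl⟩
      simp only [Set.mem_setOf_eq]
      rw [div_pow, hadd, mul_pow, mul_pow, hqq, hadd, hxi, hβi]
      have hden : x⁻¹ + β⁻¹ ≠ 0 := by
        rw [inv_add_inv hx0 hβ0]
        exact div_ne_zero h (mul_ne_zero hx0 hβ0)
      rw [div_eq_div_iff hden h]
      field_simp
      ring
  · -- InjOn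
    intro x1 h1 x2 h2 heq
    simp only [Set.mem_setOf_eq] at h1 h2
    by_cases hx1 : x1 + β = 0 <;> by_cases hx2 : x2 + β = 0
    · linear_combination hx1 - hx2
    · simp [hx1, hx2] at heq
    · simp [hx1, hx2] at heq
    · simp only [if_neg hx1, if_neg hx2, Option.some.injEq] at heq
      rw [div_eq_div_iff hx1 hx2] at heq
      have key : (α - α ^ q) * β * (x1 - x2) = 0 := by linear_combination heq
      have h12 := (mul_eq_zero.mp key).resolve_left (mul_ne_zero hαα hβ0)
      linear_combination h12
  · -- SurjOn
    intro y' hy'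
    rcases Set.mem_insert_iff.mp hy' with rfl | ⟨y, hy, rfl⟩
    · refine ⟨-β, ?_, by simp⟩
      simp only [Set.mem_setOf_eq]
      rw [neg_pow, hβ, mul_one]
      by_cases hp2 : p = 2
      · subst hp2
        haveI : CharP F 2 := hp
        rw [CharTwo.neg_eq, one_pow]
      · have hodd : Odd q := by
          rw [hqm]; exact (hpp.odd_of_ne_two hp2).pow
        exact (Odd.add_one hodd).neg_one_pow
    · simp only [Set.mem_setOf_eq] at hy
      have hay : α - y ≠ 0 := by
        intro h
        rw [sub_eq_zero] at h
        exact hα (by rw [h, hy, ← h])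
      have haqy : α ^ q - y ≠ 0 := by
        intro h
        rw [sub_eq_zero] at h
        apply hay
        rw [sub_eq_zero, ← hqq α, h, hy]
      have hxq : (β * (y - α ^ q) / (α - y)) ^ q = β ^ q * (y - α) / (α ^ q - y) := by
        rw [div_pow, mul_pow, hsub, hsub, hqq, hy]
      refine ⟨β * (y - α ^ q) / (α - y), ?_, ?_⟩
      · simp only [Set.mem_setOf_eq]
        rw [pow_succ, hxq, div_mul_div_comm,
          div_eq_one_iff_eq (mul_ne_zero haqy hay)]
        linear_combination (y - α) * (y - α ^ q) * hβq
      · have hxβ : β * (y - α ^ q) / (α - y) + β = β * (α - α ^ q) / (α - y) := by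
          field_simp
          ring
        have h0 : β * (y - α ^ q) / (α - y) + β ≠ 0 := by
          rw [hxβ]
          exact div_ne_zero (mul_ne_zero hβ0 hαα) hay
        simp only [if_neg h0, Option.some.injEq]
        rw [div_eq_iff h0]
        field_simp
        ring
end

section
/- Let f(X) = X^r B(X^{q-1}) where r is a positive integer and B(X) ∈ F_{q²}[X]. Then f permutes F_{q²} if and only if gcd(r, q-1) = 1 and the map x ↦ x^r B(x)^{q-1} permutes μ_{q+1}. -/
open Polynomial

/-- In a finite field of order `q^2`, every `(q+1)`-th root of unity is a `(q-1)`-th power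
of a nonzero element. -/
lemma aux_pow_surj (q : ℕ) (F : Type*) [Field F] [Fintype F]
    (hF : Fintype.card F = q ^ 2) (z : F) (hz : z ^ (q + 1) = 1) :
    ∃ w : F, w ≠ 0 ∧ w ^ (q - 1) = z := by
  classical
  have hz0 : z ≠ 0 := by
    intro h; rw [h, zero_pow (by omega)] at hz; exact zero_ne_one hz
  set u : Fˣ := Units.mk0 z hz0 with hu
  have hud : u ^ (q + 1) = 1 := by
    ext; push_cast [hu]; simpa using hz
  obtain ⟨g, hg⟩ := IsCyclic.exists_generator (α := Fˣ)
  have horder : orderOf g = Nat.card Fˣ := orderOf_eq_card_of_forall_mem_zpowers hg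
  have hcard : Nat.card Fˣ = (q - 1) * (q + 1) := by
    rw [Nat.card_eq_fintype_card, Fintype.card_units, hF, mul_comm, ← sq_tsub_sq q 1, one_pow]
  obtain ⟨k, hk⟩ := Subgroup.mem_zpowers_iff.mp (hg u)
  have hdvd : (((q - 1) * (q + 1) : ℕ) : ℤ) ∣ k * ((q + 1 : ℕ) : ℤ) := by
    have h1 : g ^ (k * ((q + 1 : ℕ) : ℤ)) = 1 := by
      rw [zpow_mul, hk, zpow_natCast, hud]
    have := orderOf_dvd_iff_zpow_eq_one.mpr h1
    rwa [horder, hcard] at this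
  have hq1 : ((q + 1 : ℕ) : ℤ) ≠ 0 := by positivity
  have hsk : ((q - 1 : ℕ) : ℤ) ∣ k := by
    rcases hdvd with ⟨m, hm⟩
    refine ⟨m, ?_⟩
    have h2 : k * ((q+1:ℕ) : ℤ) = ((q-1:ℕ):ℤ) * m * ((q+1:ℕ):ℤ) := by
      push_cast at hm ⊢; linarith [hm]
    exact mul_right_cancel₀ hq1 h2
  obtain ⟨m, rfl⟩ := hsk
  refine ⟨((g ^ m : Fˣ) : F), Units.ne_zero _, ?_⟩
  have : (g ^ m) ^ ((q - 1 : ℕ)) = u := by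
    rw [← zpow_natCast, ← zpow_mul, mul_comm, hk]
  calc ((g ^ m : Fˣ) : F) ^ (q - 1) = (((g ^ m) ^ (q - 1 : ℕ) : Fˣ) : F) := by push_cast; ring
    _ = z := by rw [this]; rfl

theorem stmt4 (q : ℕ) (F : Type*) [Field F] [Fintype F]
    (hF : Fintype.card F = q ^ 2)
    (r : ℕ) (hr : 0 < r) (B : F[X]) :
    Function.Bijective (fun x : F => x ^ r * B.eval (x ^ (q - 1))) ↔
      Nat.gcd r (q - 1) = 1 ∧
        Set.BijOn (fun x : F => x ^ r * (B.eval x) ^ (q - 1))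
          {x : F | x ^ (q + 1) = 1} {x : F | x ^ (q + 1) = 1} := by
  classical
  set s := q - 1 with hs_def
  set d := q + 1 with hd_def
  set f : F → F := fun x => x ^ r * B.eval (x ^ s) with hf_def
  set g : F → F := fun x => x ^ r * (B.eval x) ^ s with hg_def
  set S : Set F := {x : F | x ^ d = 1} with hS_def
  have hq : 2 ≤ q := by
    have h1 : 1 < Fintype.card F := Fintype.one_lt_card
    rw [hF] at h1
    by_contra h
    interval_cases q <;> simp at h1
  have hs1 : 1 ≤ s := by omega
  have hsd : s * d = q ^ 2 - 1 := by
    rw [hs_def, hd_def, mul_comm, ← sq_tsub_sq q 1, one_pow]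
  have hpow : ∀ x : F, x ≠ 0 → (x ^ s) ^ d = 1 := by
    intro x hx
    rw [← pow_mul, hsd, ← hF]
    exact FiniteField.pow_card_sub_one_eq_one x hx
  have hS0 : ∀ x : F, x ∈ S → x ≠ 0 := by
    intro x hx h
    rw [hS_def, Set.mem_setOf_eq, h, zero_pow (by omega)] at hx
    exact zero_ne_one hx
  have hf0 : f 0 = 0 := by
    simp [hf_def, zero_pow hr.ne', zero_pow (by omega : s ≠ 0)]
  -- key identity : g (x ^ s) = (f x) ^ s
  have hkey : ∀ x : F, g (x ^ s) = (f x) ^ s := by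
    intro x
    simp only [hg_def, hf_def, ← pow_mul, mul_pow]
    ring
  constructor
  · intro hbij
    have hinj := hbij.injective
    have hfne : ∀ x : F, x ≠ 0 → f x ≠ 0 := by
      intro x hx h
      exact hx (hinj (by rw [h, hf0]))
    constructor
    · -- gcd r s = 1
      by_contra hgcd
      set t := Nat.gcd r s with ht_def
      have ht0 : t ≠ 0 := fun h => hr.ne' (Nat.eq_zero_of_gcd_eq_zero_left h)
      have ht2 : 2 ≤ t := by omega
      set p := t.minFac with hp_def
      have hp : p.Prime := Nat.minFac_prime (by omega)
      have hpt : p ∣ t := Nat.minFac_dvd t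
      have hps : p ∣ s := hpt.trans (Nat.gcd_dvd_right r s)
      have hpr : p ∣ r := hpt.trans (Nat.gcd_dvd_left r s)
      have hpcard : p ∣ Fintype.card Fˣ := by
        rw [Fintype.card_units, hF, ← hsd]
        exact Dvd.dvd.mul_right hps d
      haveI : Fact p.Prime := ⟨hp⟩
      obtain ⟨c, hc⟩ := exists_prime_orderOf_dvd_card p hpcard
      have hcs : (c : F) ^ s = 1 := by
        have h1 : c ^ s = 1 := orderOf_dvd_iff_pow_eq_one.mp (by rw [hc]; exact hps)
        simpa using congrArg Units.val h1
      have hcr : (c : F) ^ r = 1 := by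
        have h1 : c ^ r = 1 := orderOf_dvd_iff_pow_eq_one.mp (by rw [hc]; exact hpr)
        simpa using congrArg Units.val h1
      have hfc : f (c : F) = f 1 := by
        simp [hf_def, hcs, hcr]
      have hcF : (c : F) = 1 := hinj hfc
      have hc1 : c = 1 := Units.val_eq_one.mp hcF
      rw [hc1, orderOf_one] at hc
      exact hp.one_lt.ne' hc.symm
    · -- BijOn
      have hmaps : Set.MapsTo g S S := by
        intro x hx
        obtain ⟨w, hw0, hw⟩ := aux_pow_surj q F hF x hx
        rw [hS_def, Set.mem_setOf_eq, ← hw, hkey]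
        exact hpow _ (hfne w hw0)
      have hsurj : Set.SurjOn g S S := by
        intro z hz
        obtain ⟨v, hv0, hv⟩ := aux_pow_surj q F hF z hz
        obtain ⟨w, hw⟩ := hbij.surjective v
        have hw0 : w ≠ 0 := by
          intro h; rw [h, hf0] at hw; exact hv0 hw.symm
        exact ⟨w ^ s, hpow w hw0, by rw [hkey, hw, hv]⟩
      exact ((Set.toFinite S).surjOn_iff_bijOn_of_mapsTo hmaps).mp hsurj
  · rintro ⟨hgcd, hbij⟩
    have hfne : ∀ x : F, x ≠ 0 → f x ≠ 0 := by
      intro x hx h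
      have hmem : x ^ s ∈ S := hpow x hx
      have := hbij.mapsTo hmem
      rw [hkey, h, zero_pow (by omega : s ≠ 0)] at this
      exact hS0 0 this rfl
    have hinj : Function.Injective f := by
      intro x y hxy
      rcases eq_or_ne x 0 with rfl | hx0
      · rcases eq_or_ne y 0 with rfl | hy0
        · rfl
        · exact absurd (hf0 ▸ hxy).symm (hfne y hy0)
      rcases eq_or_ne y 0 with rfl | hy0
      · exact absurd (hf0 ▸ hxy) (hfne x hx0)
      have hxs : x ^ s = y ^ s := by
        apply hbij.injOn (hpow x hx0) (hpow y hy0)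
        rw [hkey, hkey, hxy]
      obtain ⟨c, hcs, hcx⟩ : ∃ c : F, c ^ s = 1 ∧ y = c * x :=
        ⟨y * x⁻¹, by rw [mul_pow, ← hxs, inv_pow, mul_inv_cancel₀ (pow_ne_zero s hx0)],
          (inv_mul_cancel_right₀ hx0 y).symm⟩
      have hcr : c ^ r = 1 := by
        have h1 : f y = c ^ r * f x := by
          show y ^ r * B.eval (y ^ s) = c ^ r * (x ^ r * B.eval (x ^ s))
          rw [hcx, mul_pow, mul_pow, hcs, one_mul, mul_assoc]
        rw [hxy] at h1
        exact mul_right_cancel₀ (hfne y hy0)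
          (show c ^ r * f y = 1 * f y by rw [← h1, one_mul])
      have hc1 : c = 1 := by
        rw [← orderOf_eq_one_iff]
        have h1 : orderOf c ∣ r := orderOf_dvd_of_pow_eq_one hcr
        have h2 : orderOf c ∣ s := orderOf_dvd_of_pow_eq_one hcs
        have := Nat.dvd_gcd h1 h2
        rw [hgcd] at this
        exact Nat.dvd_one.mp this
      rw [hcx, hc1, one_mul]
    exact (Finite.injective_iff_bijective).mp hinj
end

section
/- Let g₀(X) = X^r B(X)^{q-1} with r an integer and B(X) ∈ F_{q²}[X] nonzero. Then g₀ permutes μ_{q+1} if and only if B(X) has no roots in μ_{q+1} and the rational function g(X) := X^r B^{(q)}(1/X)/B(X) permutes μ_{q+1}. -/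
open Polynomial

/-- The polynomial obtained from `B` by raising each coefficient to the `q`-th power. -/
noncomputable def mapq {F : Type*} [Field F] (q : ℕ) (B : F[X]) : F[X] :=
  B.sum fun i c => C (c ^ q) * X ^ i

lemma pow_q_hom {F : Type*} [Field F] [Fintype F] {q : ℕ}
    (hF : Fintype.card F = q ^ 2) : ∃ φ : F →+* F, ∀ x, φ x = x ^ q := by
  set p := ringChar F with hp'
  haveI : Fact p.Prime := ⟨CharP.char_is_prime F p⟩
  obtain ⟨n, _, hcard⟩ := FiniteField.card F p
  have hdvd : q ∣ p ^ (n : ℕ) := by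
    rw [← hcard, hF]; exact dvd_pow_self q two_ne_zero
  obtain ⟨k, _, hk⟩ := (Nat.dvd_prime_pow Fact.out).mp hdvd
  exact ⟨iterateFrobenius F p k, fun x => by rw [iterateFrobenius_def, hk]⟩

lemma eval_pow_q {F : Type*} [Field F] [Fintype F] {q : ℕ}
    (hF : Fintype.card F = q ^ 2) (B : F[X]) (x : F) :
    (B.eval x) ^ q = (mapq q B).eval (x ^ q) := by
  obtain ⟨φ, hφ⟩ := pow_q_hom hF
  rw [mapq, Polynomial.sum, Polynomial.eval_finset_sum, Polynomial.eval_eq_sum,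
    Polynomial.sum, ← hφ, map_sum]
  refine Finset.sum_congr rfl fun i _ => ?_
  simp [hφ, mul_pow, ← pow_mul, mul_comm i q]

theorem stmt5 (q : ℕ) (F : Type*) [Field F] [Fintype F]
    (hF : Fintype.card F = q ^ 2)
    (r : ℤ) (B : F[X]) (hB : B ≠ 0) :
    Set.BijOn (fun x : F => x ^ r * (B.eval x) ^ (q - 1))
        {x : F | x ^ (q + 1) = 1} {x : F | x ^ (q + 1) = 1} ↔
      (∀ x : F, x ^ (q + 1) = 1 → B.eval x ≠ 0) ∧
        Set.BijOn (fun x : F => x ^ r * (mapq q B).eval x⁻¹ / B.eval x)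
          {x : F | x ^ (q + 1) = 1} {x : F | x ^ (q + 1) = 1} := by
  have hq : 2 ≤ q := by
    by_contra h
    push_neg at h
    have h1 : 1 < Fintype.card F := Fintype.one_lt_card
    interval_cases q <;> simp_all
  have key : ∀ x : F, x ^ (q + 1) = 1 → B.eval x ≠ 0 →
      x ^ r * (B.eval x) ^ (q - 1) = x ^ r * (mapq q B).eval x⁻¹ / B.eval x := by
    intro x hx hbx
    have hx0 : x ≠ 0 := by
      rintro rfl
      rw [zero_pow (Nat.succ_ne_zero q)] at hx
      exact zero_ne_one hx
    have hxq : x ^ q = x⁻¹ := eq_inv_of_mul_eq_one_left (by rw [← pow_succ, hx])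
    rw [← hxq, ← eval_pow_q hF, pow_sub₀ _ hbx (Nat.one_le_of_lt hq), pow_one,
      mul_div_assoc, div_eq_mul_inv]
  constructor
  · intro h
    have hroot : ∀ x : F, x ^ (q + 1) = 1 → B.eval x ≠ 0 := by
      intro x hx hbx
      have hmem := h.mapsTo hx
      simp only [Set.mem_setOf_eq, hbx, zero_pow (by omega : q - 1 ≠ 0), mul_zero,
        zero_pow (Nat.succ_ne_zero q)] at hmem
      exact zero_ne_one hmem
    exact ⟨hroot, h.congr fun x hx => key x hx (hroot x hx)⟩
  · rintro ⟨hroot, h⟩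
    exact h.congr fun x hx => (key x hx (hroot x hx)).symm
end

section
/- Let B(X) ∈ F_{q²}[X] be nonzero and n ≥ deg(B) an integer, and set g(X) := Xⁿ B^{(q)}(1/X)/B(X). If g has degree n as a rational function, then B(X) has no roots in μ_{q+1} and g maps μ_{q+1} into μ_{q+1}. -/
open Polynomial

/-- The degree of a rational function: the max of the degrees of its
(coprime) numerator and denominator. -/
noncomputable def ratDeg {F : Type*} [Field F] (g : RatFunc F) : ℕ :=
  max g.num.natDegree g.denom.natDegree

lemma ratDeg_div_le {F : Type*} [Field F] (p q : F[X]) :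
    ratDeg ((algebraMap F[X] (RatFunc F) p) / (algebraMap F[X] (RatFunc F) q)) ≤
      max p.natDegree q.natDegree := by
  by_cases hq : q = 0
  · simp [hq, ratDeg]
  refine max_le ?_ ?_
  · by_cases hp : p = 0
    · simp [hp, ratDeg]
    · exact le_max_of_le_left
        (Polynomial.natDegree_le_of_dvd (RatFunc.num_div_dvd p hq) hp)
  · exact le_max_of_le_right
      (Polynomial.natDegree_le_of_dvd (RatFunc.denom_div_dvd p q) hq)

theorem stmt6 (q : ℕ) (F : Type*) [Field F] [Fintype F]
    (hF : Fintype.card F = q ^ 2)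
    (B : F[X]) (hB : B ≠ 0) (n : ℕ) (hn : B.natDegree ≤ n)
    -- `N(X) = Xⁿ B^{(q)}(1/X)` as a polynomial
    (N : F[X]) (hN : N = B.sum fun i c => C (c ^ q) * X ^ (n - i))
    (hdeg : ratDeg ((algebraMap F[X] (RatFunc F) N) /
      (algebraMap F[X] (RatFunc F) B)) = n) :
    (∀ x : F, x ^ (q + 1) = 1 → B.eval x ≠ 0) ∧
      (∀ x : F, x ^ (q + 1) = 1 →
        (x ^ n * (mapq q B).eval x⁻¹ / B.eval x) ^ (q + 1) = 1) := by
  -- basic facts about `q`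
  have hq0 : q ≠ 0 := by
    rintro rfl
    have := Fintype.card_pos (α := F)
    omega
  -- the characteristic
  set p := ringChar F with hpdef
  have hp : p.Prime := CharP.char_is_prime F p
  haveI : Fact p.Prime := ⟨hp⟩
  obtain ⟨m, -, hcard⟩ := FiniteField.card F p
  have hqp : ∃ k, q = p ^ k := by
    have hdvd : q ∣ p ^ (m : ℕ) := by
      rw [← hcard, hF]
      exact ⟨q, sq q⟩
    obtain ⟨k, -, hk⟩ := (Nat.dvd_prime_pow hp).mp hdvd
    exact ⟨k, hk⟩
  obtain ⟨k, hk⟩ := hqp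
  haveI : ExpChar F p := ExpChar.prime hp
  -- nonzero elements of μ_{q+1}
  have hx0 : ∀ x : F, x ^ (q + 1) = 1 → x ≠ 0 := by
    rintro x hx rfl
    rw [zero_pow (Nat.succ_ne_zero q)] at hx
    exact zero_ne_one hx
  have hinv : ∀ x : F, x ^ (q + 1) = 1 → x⁻¹ = x ^ q := by
    intro x hx
    exact inv_eq_of_mul_eq_one_right (by rw [← pow_succ'] ; exact hx)
  -- evaluation of `mapq q B`
  have hmapq_eval : ∀ y : F, (mapq q B).eval y = ∑ i ∈ B.support, (B.coeff i) ^ q * y ^ i := by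
    intro y
    rw [mapq, Polynomial.sum_def, Polynomial.eval_finset_sum]
    simp
  -- key Frobenius computation
  have hmapq : ∀ x : F, x ^ (q + 1) = 1 → (mapq q B).eval x⁻¹ = (B.eval x) ^ q := by
    intro x hx
    rw [hmapq_eval, Polynomial.eval_eq_sum, Polynomial.sum_def, hk, sum_pow_char_pow]
    refine Finset.sum_congr rfl fun i _ => ?_
    rw [hinv x hx, hk, mul_pow, ← pow_mul, ← pow_mul, mul_comm i (p ^ k)]
  -- evaluation of N
  have hNeval : ∀ x : F, x ≠ 0 → N.eval x = x ^ n * (mapq q B).eval x⁻¹ := by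
    intro x hx
    rw [hN, Polynomial.sum_def, Polynomial.eval_finset_sum, hmapq_eval, Finset.mul_sum]
    refine Finset.sum_congr rfl fun i hi => ?_
    have hi' : i ≤ n := le_trans (Polynomial.le_natDegree_of_mem_supp i hi) hn
    rw [eval_mul, eval_C, eval_pow, eval_X]
    have : x ^ n = x ^ (n - i) * x ^ i := by rw [← pow_add, Nat.sub_add_cancel hi']
    rw [this]
    have hxi : x ^ i * x⁻¹ ^ i = 1 := by rw [← mul_pow, mul_inv_cancel₀ hx, one_pow]
    linear_combination (-(B.coeff i ^ q * x ^ (n - i))) * hxi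
  -- Part 1
  have part1 : ∀ x : F, x ^ (q + 1) = 1 → B.eval x ≠ 0 := by
    intro x hx hroot
    have hx' : x ≠ 0 := hx0 x hx
    have hNx : N.eval x = 0 := by
      rw [hNeval x hx', hmapq x hx, hroot, zero_pow hq0, mul_zero]
    have hdvdB : (X - C x) ∣ B := dvd_iff_isRoot.mpr hroot
    have hdvdN : (X - C x) ∣ N := dvd_iff_isRoot.mpr hNx
    obtain ⟨B₁, hB₁⟩ := hdvdB
    obtain ⟨N₁, hN₁⟩ := hdvdN
    have hXx : (X - C x : F[X]) ≠ 0 := X_sub_C_ne_zero x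
    have hB1ne : B₁ ≠ 0 := by
      rintro rfl
      rw [mul_zero] at hB₁
      exact hB hB₁
    have hdegBsplit : B.natDegree = 1 + B₁.natDegree := by
      rw [hB₁, Polynomial.natDegree_mul hXx hB1ne, natDegree_X_sub_C]
    have hn1 : 1 ≤ n := by omega
    have hdegN : N.natDegree ≤ n := by
      rw [hN, Polynomial.sum_def]
      exact Polynomial.natDegree_sum_le_of_forall_le _ _ fun i _ =>
        le_trans (Polynomial.natDegree_C_mul_X_pow_le _ _) (Nat.sub_le n i)
    have hdegN1 : N₁.natDegree ≤ n - 1 := by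
      by_cases h : N₁ = 0
      · simp [h]
      · have : N.natDegree = 1 + N₁.natDegree := by
          rw [hN₁, Polynomial.natDegree_mul hXx h, natDegree_X_sub_C]
        omega
    have hfrac : (algebraMap F[X] (RatFunc F) N) / (algebraMap F[X] (RatFunc F) B)
        = (algebraMap F[X] (RatFunc F) N₁) / (algebraMap F[X] (RatFunc F) B₁) := by
      rw [hB₁, hN₁, map_mul, map_mul,
        mul_div_mul_left _ _ (RatFunc.algebraMap_ne_zero hXx)]
    rw [hfrac] at hdeg
    have hle := ratDeg_div_le N₁ B₁
    rw [hdeg] at hle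
    omega
  refine ⟨part1, fun x hx => ?_⟩
  have hb : B.eval x ≠ 0 := part1 x hx
  rw [hmapq x hx]
  set b := B.eval x with hbdef
  have hbq : b ^ (q ^ 2) = b := by
    rw [← hF]
    exact FiniteField.pow_card b
  have h1 : (x ^ n) ^ (q + 1) = 1 := by
    rw [← pow_mul, mul_comm, pow_mul, hx, one_pow]
  have h2 : (b ^ q) ^ (q + 1) = b ^ (q + 1) := by
    rw [← pow_mul, show q * (q + 1) = q ^ 2 + q by ring, pow_add, hbq, ← pow_succ']
  rw [div_pow, mul_pow, h1, one_mul, h2, div_self (pow_ne_zero _ hb)]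
end

section
/- If B(X) and N(X) := Xⁿ B^{(q)}(1/X) are coprime polynomials in F_{q²}[X] (with n ≥ deg B and B nonzero), and α ∈ μ_{q+1} is any element, then B(α) ≠ 0 and (N(α)/B(α))^{q+1} = 1. -/
open Polynomial

theorem stmt8 (q : ℕ) (F : Type*) [Field F] [Fintype F]
    (hF : Fintype.card F = q ^ 2)
    (B : F[X]) (hB : B ≠ 0) (n : ℕ) (hn : B.natDegree ≤ n)
    (N : F[X]) (hN : N = B.sum fun i c => C (c ^ q) * X ^ (n - i))
    (hcop : IsCoprime B N)
    (α : F) (hα : α ^ (q + 1) = 1) :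
    B.eval α ≠ 0 ∧ (N.eval α / B.eval α) ^ (q + 1) = 1 := by
  classical
  have hcard : 1 < Fintype.card F := Fintype.one_lt_card
  have hq0 : q ≠ 0 := by rintro rfl; rw [hF] at hcard; simp at hcard
  -- characteristic
  obtain ⟨p, hpc⟩ := CharP.exists F
  haveI := hpc
  have hp : p.Prime := CharP.char_is_prime F p
  haveI : Fact p.Prime := ⟨hp⟩
  obtain ⟨f, -, hcard_eq⟩ := FiniteField.card F p
  have hqdvd : q ∣ p ^ (f : ℕ) := ⟨q, by rw [← hcard_eq, hF]; ring⟩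
  obtain ⟨m, -, hq_eq⟩ := (Nat.dvd_prime_pow hp).mp hqdvd
  haveI : ExpChar F p := ExpChar.prime hp
  have hsumq : ∀ (s : Finset ℕ) (g : ℕ → F),
      (∑ i ∈ s, g i) ^ q = ∑ i ∈ s, g i ^ q := by
    subst hq_eq; intro s g; exact sum_pow_char_pow p m s g
  have hα0 : α ≠ 0 := by
    intro h; rw [h, zero_pow (by omega)] at hα; exact zero_ne_one hα
  have hpow : ∀ i, i ∈ B.support → α ^ (n - i) = α ^ n * (α ^ i) ^ q := by
    intro i hi
    have hin : i ≤ n := le_trans (Polynomial.le_natDegree_of_mem_supp i hi) hn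
    apply mul_right_cancel₀ (pow_ne_zero i hα0)
    rw [← pow_add, Nat.sub_add_cancel hin, mul_assoc, ← pow_mul, ← pow_add,
      show i * q + i = (q + 1) * i by ring, pow_mul, hα, one_pow, mul_one]
  have hNev : N.eval α = ∑ i ∈ B.support, (B.coeff i) ^ q * α ^ (n - i) := by
    rw [hN, Polynomial.sum_def, Polynomial.eval_finset_sum]
    simp
  have hkey : N.eval α = α ^ n * (B.eval α) ^ q := by
    rw [hNev, Polynomial.eval_eq_sum, Polynomial.sum_def, hsumq, Finset.mul_sum]
    refine Finset.sum_congr rfl fun i hi => ?_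
    rw [mul_pow, hpow i hi]; ring
  have hBα : B.eval α ≠ 0 := by
    intro hb
    obtain ⟨u, v, huv⟩ := hcop
    have := congrArg (Polynomial.eval α) huv
    simp only [Polynomial.eval_add, Polynomial.eval_mul, Polynomial.eval_one, hb,
      hkey, mul_zero, zero_pow hq0] at this
    simpa using this
  refine ⟨hBα, ?_⟩
  have hone : (B.eval α) ^ (q ^ 2 - 1) = 1 := by
    rw [← hF]; exact FiniteField.pow_card_sub_one_eq_one _ hBα
  rw [hkey, div_pow, mul_pow, ← pow_mul, ← pow_mul, mul_comm n (q + 1), pow_mul,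
    hα, one_pow, one_mul, div_eq_one_iff_eq (pow_ne_zero _ hBα)]
  have h1 : 1 ≤ q ^ 2 := Nat.one_le_pow _ _ (Nat.pos_of_ne_zero hq0)
  have h2 : q * (q + 1) = q ^ 2 + q := by ring
  have h3 : q * (q + 1) = (q + 1) + (q ^ 2 - 1) := by omega
  rw [h3, pow_add, hone, mul_one]
end

section
/- Let n be a positive integer, u, v distinct elements of μ_{q+1}, and a, b ∈ F_{q²}* with (b/a)^{q-1} ≠ (v/u)ⁿ. Then the polynomial B(X) := a(X+u)ⁿ + b(X+v)ⁿ has no roots in μ_{q+1}. -/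
open Polynomial

theorem stmt11 (q : ℕ) (F : Type*) [Field F] [Fintype F]
    (hF : Fintype.card F = q ^ 2)
    (n : ℕ) (hn : 0 < n)
    (u v : F) (hu : u ^ (q + 1) = 1) (hv : v ^ (q + 1) = 1) (huv : u ≠ v)
    (a b : F) (ha : a ≠ 0) (hb : b ≠ 0)
    (hab : (b / a) ^ (q - 1) ≠ (v / u) ^ n)
    (B : F[X]) (hB : B = C a * (X + C u) ^ n + C b * (X + C v) ^ n) :
    ∀ x : F, x ^ (q + 1) = 1 → B.eval x ≠ 0 := by
  subst hB
  intro x hx hx0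
  simp only [eval_add, eval_mul, eval_pow, eval_C, eval_X] at hx0
  -- q ≥ 1
  have hq1 : 1 ≤ q := by
    rcases Nat.eq_zero_or_pos q with h | h
    · have := Fintype.one_lt_card (α := F)
      rw [hF, h] at this; simp at this
    · exact h
  -- nonzero elements
  have hxne : x ≠ 0 := by rintro rfl; simp [zero_pow] at hx
  have hune : u ≠ 0 := by rintro rfl; simp [zero_pow] at hu
  have hvne : v ≠ 0 := by rintro rfl; simp [zero_pow] at hv
  -- x + u ≠ 0, x + v ≠ 0
  have hA : x + u ≠ 0 := by
    intro h
    rw [h] at hx0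
    have hxv : x + v ≠ 0 := by
      intro h'
      apply huv
      have : u = -x := by linear_combination h
      have : v = -x := by linear_combination h'
      simp_all
    simp [zero_pow hn.ne'] at hx0
    rcases hx0 with h1 | h1
    · exact hb h1
    · exact hxv h1.1
  have hBv : x + v ≠ 0 := by
    intro h
    rw [h] at hx0
    simp [zero_pow hn.ne'] at hx0
    rcases hx0 with h1 | h1
    · exact ha h1
    · exact hA h1.1
  -- Frobenius: q is a power of the characteristic
  set p := ringChar F with hpdef
  haveI : CharP F p := ringChar.charP F
  obtain ⟨m, hp, hcard⟩ := FiniteField.card F p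
  haveI : Fact p.Prime := ⟨hp⟩
  have hqdvd : q ∣ p ^ (m : ℕ) := by
    rw [← hcard, hF]; exact dvd_pow_self q two_ne_zero
  obtain ⟨k, hk, hqk⟩ := (Nat.dvd_prime_pow hp).mp hqdvd
  -- the Frobenius x ↦ x ^ q
  have hfrob : ∀ s t : F, (s + t) ^ q = s ^ q + t ^ q := by
    intro s t
    rw [hqk]
    exact add_pow_expChar_pow ..
  -- inverses
  have hxq : x ^ q = x⁻¹ := by
    apply eq_inv_of_mul_eq_one_left; rw [← pow_succ]; exact hx
  have huq : u ^ q = u⁻¹ := by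
    apply eq_inv_of_mul_eq_one_left; rw [← pow_succ]; exact hu
  have hvq : v ^ q = v⁻¹ := by
    apply eq_inv_of_mul_eq_one_left; rw [← pow_succ]; exact hv
  -- raise the relation to the q-th power
  have h2 : a ^ q * (x⁻¹ + u⁻¹) ^ n + b ^ q * (x⁻¹ + v⁻¹) ^ n = 0 := by
    have := congrArg (· ^ q) hx0
    simp only [zero_pow (by omega : q ≠ 0)] at this
    rw [hfrob, mul_pow, mul_pow, ← pow_mul, ← pow_mul, Nat.mul_comm n q, pow_mul, pow_mul,
      hfrob, hfrob, hxq, huq, hvq] at this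
    exact this
  have e1 : x⁻¹ + u⁻¹ = (x + u) / (x * u) := by field_simp; ring
  have e2 : x⁻¹ + v⁻¹ = (x + v) / (x * v) := by field_simp; ring
  rw [e1, e2, div_pow, div_pow] at h2
  have h2' : a ^ q * (x + u) ^ n * (x * v) ^ n + b ^ q * (x + v) ^ n * (x * u) ^ n = 0 := by
    have hne : ((x * u) ^ n : F) ≠ 0 := pow_ne_zero n (mul_ne_zero hxne hune)
    have hne' : ((x * v) ^ n : F) ≠ 0 := pow_ne_zero n (mul_ne_zero hxne hvne)
    field_simp at h2
    linear_combination h2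
  -- eliminate
  have h3 : (x + v) ^ n * x ^ n * (a * b ^ q * u ^ n - a ^ q * b * v ^ n) = 0 := by
    linear_combination a * h2' - a ^ q * (x * v) ^ n * hx0
  have key : a * b ^ q * u ^ n = a ^ q * b * v ^ n := by
    rcases mul_eq_zero.mp h3 with h4 | h4
    · rcases mul_eq_zero.mp h4 with h5 | h5
      · exact absurd h5 (pow_ne_zero n hBv)
      · exact absurd h5 (pow_ne_zero n hxne)
    · linear_combination h4
  apply hab
  have hba : (b / a) ≠ 0 := div_ne_zero hb ha
  have h5 : (b / a) ^ (q - 1) * (b / a) = (v / u) ^ n * (b / a) := by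
    rw [← pow_succ, (by omega : q - 1 + 1 = q), div_pow, div_pow]
    rw [div_eq_iff (pow_ne_zero q ha)]
    field_simp
    linear_combination key
  exact mul_right_cancel₀ hba h5
end

section
/- Let n be a positive integer and a, b, v ∈ F_{q²}* with v ∉ μ_{q+1} and bvⁿ/a ∉ μ_{q+1}. Then the polynomial B(X) := a(X+v^{-q})ⁿ + b(X+v)ⁿ has no roots in μ_{q+1}. -/
open Polynomial

theorem stmt12 (q : ℕ) (F : Type*) [Field F] [Fintype F]
    (hF : Fintype.card F = q ^ 2)
    (n : ℕ) (hn : 0 < n)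
    (a b v : F) (ha : a ≠ 0) (hb : b ≠ 0) (hv : v ≠ 0)
    (hvμ : v ^ (q + 1) ≠ 1) (hab : (b * v ^ n / a) ^ (q + 1) ≠ 1)
    (B : F[X]) (hB : B = C a * (X + C (v ^ q)⁻¹) ^ n + C b * (X + C v) ^ n) :
    ∀ x : F, x ^ (q + 1) = 1 → B.eval x ≠ 0 := by
  subst hB
  intro x hx hzero
  have h1card : 1 < Fintype.card F := Fintype.one_lt_card
  rw [hF] at h1card
  have hq2 : 2 ≤ q := by nlinarith
  obtain ⟨p, hcp⟩ := CharP.exists F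
  haveI := hcp
  have hp : p.Prime := CharP.char_is_prime F p
  haveI := Fact.mk hp
  obtain ⟨k, -, hcard⟩ := FiniteField.card F p
  have hdvd : q ∣ p ^ (k : ℕ) := by
    rw [← hcard, hF]; exact dvd_pow_self q (by norm_num)
  obtain ⟨j, hjk, hqj⟩ := (Nat.dvd_prime_pow hp).mp hdvd
  -- (-1)^(q+1) = 1
  have hneg : (-1 : F) ^ (q + 1) = 1 := by
    rcases hp.eq_two_or_odd' with h2 | hodd
    · subst h2
      have h20 : (2 : F) = 0 := by exact_mod_cast CharP.cast_eq_zero F 2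
      have : (-1 : F) = 1 := by linear_combination -h20
      rw [this, one_pow]
    · have hoq : Odd q := hqj ▸ hodd.pow
      exact hoq.add_one.neg_one_pow
  -- Fermat-type lemma
  have key : ∀ u : F, u ≠ 0 → u ^ (q * (q + 1)) = u ^ (q + 1) := by
    intro u hu
    have hfe : u ^ (q ^ 2 - 1) = 1 := by
      have := FiniteField.pow_card_sub_one_eq_one u hu
      rwa [hF] at this
    have h0 : 0 < q ^ 2 := by positivity
    have hexp : q * (q + 1) = q ^ 2 - 1 + (q + 1) := by
      have : q * (q + 1) = q ^ 2 + q := by ring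
      omega
    rw [hexp, pow_add, hfe, one_mul]
  have hx0 : x ≠ 0 := by
    rintro rfl
    rw [zero_pow (by omega : q + 1 ≠ 0)] at hx
    exact one_ne_zero hx.symm
  have hu : x + v ≠ 0 := by
    intro h
    have hxv : x = -v := by linear_combination h
    rw [hxv, neg_pow, hneg, one_mul] at hx
    exact hvμ hx
  have hvq : v ^ q ≠ 0 := pow_ne_zero _ hv
  have hxq : x ^ q = x⁻¹ := by
    have hx1 : x ^ q * x = 1 := by rw [← pow_succ]; exact hx
    exact eq_inv_of_mul_eq_one_left hx1
  have hfrob : (x + v) ^ q = x⁻¹ * v ^ q * (x + (v ^ q)⁻¹) := by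
    have h1 : (x + v) ^ q = x ^ q + v ^ q := by
      subst hqj; exact add_pow_char_pow x v p j
    rw [h1, hxq]
    field_simp
    ring
  have hw : x + (v ^ q)⁻¹ ≠ 0 := by
    intro h
    rw [h, mul_zero] at hfrob
    exact pow_ne_zero q hu hfrob
  have hE : v ^ q * (x + (v ^ q)⁻¹) = x * (x + v) ^ q := by
    rw [hfrob]; field_simp
  simp only [eval_add, eval_mul, eval_pow, eval_C, eval_X] at hzero
  have hzero' : a * (x + (v ^ q)⁻¹) ^ n = -(b * (x + v) ^ n) := by
    linear_combination hzero
  have h2 : (v ^ q) ^ n * (x + (v ^ q)⁻¹) ^ n = x ^ n * ((x + v) ^ q) ^ n := by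
    rw [← mul_pow, ← mul_pow, hE]
  have hE1 : a * x ^ n * (x + v) ^ (q * n) = -(b * v ^ (q * n) * (x + v) ^ n) := by
    calc a * x ^ n * (x + v) ^ (q * n)
        = a * (x ^ n * ((x + v) ^ q) ^ n) := by rw [← pow_mul]; ring
      _ = a * ((v ^ q) ^ n * (x + (v ^ q)⁻¹) ^ n) := by rw [h2]
      _ = (v ^ q) ^ n * (a * (x + (v ^ q)⁻¹) ^ n) := by ring
      _ = (v ^ q) ^ n * (-(b * (x + v) ^ n)) := by rw [hzero']
      _ = -(b * v ^ (q * n) * (x + v) ^ n) := by rw [← pow_mul]; ring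
  have h3 : (a * x ^ n * (x + v) ^ (q * n)) ^ (q + 1)
      = (-(b * v ^ (q * n) * (x + v) ^ n)) ^ (q + 1) := by rw [hE1]
  rw [neg_pow, hneg, one_mul, mul_pow, mul_pow, mul_pow, mul_pow] at h3
  have hx1 : (x ^ n) ^ (q + 1) = 1 := by
    rw [← pow_mul, mul_comm, pow_mul, hx, one_pow]
  have hu1 : ((x + v) ^ (q * n)) ^ (q + 1) = ((x + v) ^ (q + 1)) ^ n := by
    rw [← pow_mul, show q * n * (q + 1) = q * (q + 1) * n from by ring, pow_mul,
      key _ hu, ← pow_mul, mul_comm (q + 1) n, pow_mul]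
  have hv1 : (v ^ (q * n)) ^ (q + 1) = (v ^ (q + 1)) ^ n := by
    rw [← pow_mul, show q * n * (q + 1) = q * (q + 1) * n from by ring, pow_mul,
      key _ hv, ← pow_mul, mul_comm (q + 1) n, pow_mul]
  have hu2 : ((x + v) ^ n) ^ (q + 1) = ((x + v) ^ (q + 1)) ^ n := by
    rw [← pow_mul, mul_comm, pow_mul]
  rw [hx1, hu1, hv1, hu2, mul_one] at h3
  have hcancel : ((x + v) ^ (q + 1)) ^ n ≠ 0 := pow_ne_zero _ (pow_ne_zero _ hu)
  have hE4 : a ^ (q + 1) = b ^ (q + 1) * (v ^ (q + 1)) ^ n :=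
    mul_right_cancel₀ hcancel (by linear_combination h3)
  apply hab
  rw [div_pow, mul_pow, ← pow_mul v, mul_comm n (q + 1), pow_mul, ← hE4,
    div_self (pow_ne_zero _ ha)]
end

section
/- Let u, v be distinct elements of μ_{q+1} and let w ∈ F_{q²}* satisfy w^{q-1} = u/v. Then w ∉ F_q, and the rational map X ↦ (wX + vw^q)/(X + v) maps μ_{q+1} bijectively onto P¹(F_q). -/
theorem stmt13 (q : ℕ) (F : Type*) [Field F] [Fintype F] [DecidableEq F]
    (hF : Fintype.card F = q ^ 2)
    (u v : F) (hu : u ^ (q + 1) = 1) (hv : v ^ (q + 1) = 1) (huv : u ≠ v)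
    (w : F) (hw : w ≠ 0) (hwq : w ^ (q - 1) = u / v) :
    w ^ q ≠ w ∧
      Set.BijOn
        (fun x : F => if x + v = 0 then (none : Option F)
          else some ((w * x + v * w ^ q) / (x + v)))
        {x : F | x ^ (q + 1) = 1}
        (insert none (Option.some '' {y : F | y ^ q = y})) := by
  classical
  have h2 : 1 < Fintype.card F := Fintype.one_lt_card
  have hq2 : 2 ≤ q := by nlinarith [hF ▸ h2]
  -- characteristic setup
  set p := ringChar F with hpdef
  haveI : CharP F p := ringChar.charP F
  obtain ⟨n, hp, hcard⟩ := FiniteField.card F p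
  haveI : Fact p.Prime := ⟨hp⟩
  have hqd : q ∣ p ^ (n : ℕ) := ⟨q, by rw [← hcard, hF]; ring⟩
  obtain ⟨m, -, hqm⟩ := (Nat.dvd_prime_pow hp).mp hqd
  -- Frobenius x ↦ x ^ q as a ring hom
  set φ : F →+* F := iterateFrobenius F p m with hφdef
  have hφ : ∀ x : F, φ x = x ^ q := fun x => by
    rw [hφdef, iterateFrobenius_def, hqm]
  have hff : ∀ x : F, (x ^ q) ^ q = x := fun x => by
    rw [← pow_mul]
    have hqq : q * q = Fintype.card F := by rw [hF]; ring
    rw [hqq, FiniteField.pow_card]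
  -- basic nonvanishing
  have hv0 : v ≠ 0 := fun h => by simp [h, zero_pow, Nat.succ_ne_zero] at hv
  have hu0 : u ≠ 0 := fun h => by simp [h, zero_pow, Nat.succ_ne_zero] at hu
  -- part 1 : w ^ q ≠ w
  have hwqw : w ^ q ≠ w := by
    intro h
    have hq' : q = (q - 1) + 1 := by omega
    rw [hq', pow_succ, hwq] at h
    have huv1 : u / v = 1 := by
      have := mul_right_cancel₀ hw (h.trans (one_mul w).symm)
      exact this
    exact huv (by field_simp at huv1; exact huv1)
  have hwne : w - w ^ q ≠ 0 := sub_ne_zero.mpr (fun h => hwqw (h.symm))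
  have hwne' : w ^ q - w ≠ 0 := sub_ne_zero.mpr hwqw
  -- inversion facts for μ_{q+1}
  have hmu0 : ∀ x : F, x ^ (q + 1) = 1 → x ≠ 0 := by
    intro x hx h; simp [h, zero_pow, Nat.succ_ne_zero] at hx
  have hmuq : ∀ x : F, x ^ (q + 1) = 1 → x ^ q = x⁻¹ := by
    intro x hx
    have hx0 := hmu0 x hx
    field_simp
    rw [← pow_succ]; exact hx
  have hvq : v ^ q = v⁻¹ := hmuq v hv
  -- -v ∈ μ_{q+1}
  have hneg1 : ((-1 : F)) ^ q = -1 := by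
    rw [← hφ, map_neg, map_one]
  have hnegv : (-v) ^ (q + 1) = 1 := by
    rw [← neg_one_mul, mul_pow, hv, mul_one, pow_succ, hneg1]
    norm_num
  refine ⟨hwqw, ?_, ?_, ?_⟩
  · -- MapsTo
    intro x hx
    simp only [Set.mem_setOf_eq] at hx
    have hx0 := hmu0 x hx
    have hxq := hmuq x hx
    by_cases hxv : x + v = 0
    · simp [hxv]
    · simp only [hxv, if_neg, Set.mem_insert_iff, Set.mem_image, Set.mem_setOf_eq]
      right
      refine ⟨(w * x + v * w ^ q) / (x + v), ?_, rfl⟩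
      rw [← hφ, map_div₀, map_add, map_add, map_mul, map_mul, hφ, hφ, hφ, hφ, hff, hxq, hvq]
      have hinv : x⁻¹ + v⁻¹ = (x + v) * (x⁻¹ * v⁻¹) := by
        field_simp; ring
      rw [div_eq_div_iff (by rw [hinv]; exact mul_ne_zero hxv (by simp [hx0, hv0])) hxv]
      field_simp
      ring
  · -- InjOn
    intro x hx x' hx' hfe
    simp only at hfe
    by_cases h1 : x + v = 0 <;> by_cases h2 : x' + v = 0
    · linear_combination h1 - h2
    · simp [h1, h2] at hfe
    · simp [h1, h2] at hfe
    · simp only [h1, h2, if_neg] at hfe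
      have heq := Option.some_injective F hfe
      rw [div_eq_div_iff h1 h2] at heq
      have key : v * (w - w ^ q) * (x - x') = 0 := by linear_combination heq
      rcases mul_eq_zero.mp key with h | h
      · rcases mul_eq_zero.mp h with h | h
        · exact absurd h hv0
        · exact absurd h hwne
      · exact sub_eq_zero.mp h
  · -- SurjOn
    intro z hz
    rcases hz with rfl | ⟨y, hy, rfl⟩
    · exact ⟨-v, hnegv, by simp⟩
    · simp only [Set.mem_setOf_eq] at hy
      have hyw : y - w ≠ 0 := by
        intro h
        rw [sub_eq_zero] at h
        exact hwqw (by rw [← h, hy, h])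
      have hywq : w ^ q - y ≠ 0 := by
        intro h
        rw [sub_eq_zero] at h
        apply hwqw
        have h2 := hff w
        rw [h, hy] at h2
        rw [h, h2]
      set x : F := v * (w ^ q - y) / (y - w) with hxdef
      have hx0 : x ≠ 0 := by
        rw [hxdef]
        exact div_ne_zero (mul_ne_zero hv0 hywq) hyw
      have hxmu : x ^ (q + 1) = 1 := by
        rw [pow_succ, ← hφ, hxdef, map_div₀, map_mul, map_sub, map_sub, hφ, hφ, hφ, hφ,
          hff, hy, hvq]
        have hyw' : y - w ^ q ≠ 0 := fun h => hywq (by linear_combination -h)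
        field_simp
        ring
      have hxv : x + v ≠ 0 := by
        have hxvval : x + v = v * (w ^ q - w) / (y - w) := by
          rw [hxdef]; field_simp; ring
        rw [hxvval]
        exact div_ne_zero (mul_ne_zero hv0 hwne') hyw
      refine ⟨x, hxmu, ?_⟩
      simp only [if_neg hxv]
      congr 1
      rw [div_eq_iff hxv, hxdef]
      field_simp
      ring
end

section
/- Let n be a positive integer with gcd(n, q-1) = 1, u, v distinct elements of μ_{q+1}, and a, b ∈ F_{q²}* with (b/a)^{q-1} ≠ (v/u)ⁿ. Set B(X) := a(X+u)ⁿ + b(X+v)ⁿ. Then the map x ↦ xⁿ B^{(q)}(1/x)/B(x) permutes μ_{q+1}. -/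
open Polynomial

private lemma mapq_eval_frob {F : Type*} [Field F] (p j : ℕ) [Fact p.Prime] [CharP F p]
    (B : F[X]) (x : F) :
    (mapq (p ^ j) B).eval (x ^ p ^ j) = (B.eval x) ^ p ^ j := by
  have hφ : ∀ y : F, iterateFrobenius F p j y = y ^ p ^ j := fun y => iterateFrobenius_def p j y
  rw [mapq, Polynomial.eval_sum, Polynomial.eval_eq_sum, Polynomial.sum_def, Polynomial.sum_def]
  conv_rhs => rw [← hφ, map_sum]
  refine Finset.sum_congr rfl fun i _ => ?_
  rw [eval_mul, eval_pow, eval_C, eval_X, hφ, mul_pow, ← pow_mul, mul_comm (p ^ j) i, pow_mul]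

theorem stmt15 (q : ℕ) (F : Type*) [Field F] [Fintype F]
    (hF : Fintype.card F = q ^ 2)
    (n : ℕ) (hn : 0 < n) (hgcd : Nat.gcd n (q - 1) = 1)
    (u v : F) (hu : u ^ (q + 1) = 1) (hv : v ^ (q + 1) = 1) (huv : u ≠ v)
    (a b : F) (ha : a ≠ 0) (hb : b ≠ 0)
    (hab : (b / a) ^ (q - 1) ≠ (v / u) ^ n)
    (B : F[X]) (hB : B = C a * (X + C u) ^ n + C b * (X + C v) ^ n) :
    Set.BijOn (fun x : F => x ^ n * (mapq q B).eval x⁻¹ / B.eval x)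
      {x : F | x ^ (q + 1) = 1} {x : F | x ^ (q + 1) = 1} := by
  -- basic facts about q
  have hq2 : 2 ≤ q := by
    by_contra h
    push_neg at h
    have h2 : 2 ≤ Fintype.card F := Fintype.one_lt_card
    interval_cases q <;> simp_all
  -- characteristic
  obtain ⟨p, hcp⟩ := CharP.exists F
  haveI := hcp
  haveI hpF : Fact p.Prime := ⟨CharP.char_is_prime F p⟩
  obtain ⟨m, hpm, hcard⟩ := FiniteField.card F p
  have hqdvd : q ∣ p ^ (m : ℕ) := by
    rw [← hcard, hF]
    exact dvd_pow_self q two_ne_zero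
  obtain ⟨j, hj, hqpj⟩ := (Nat.dvd_prime_pow hpm).mp hqdvd
  -- Frobenius facts
  have hφdef : ∀ y : F, iterateFrobenius F p j y = y ^ q := by
    intro y; rw [iterateFrobenius_def, hqpj]
  set φ := iterateFrobenius F p j with hφ
  -- membership facts
  have hmem : ∀ x : F, x ^ (q + 1) = 1 → x ≠ 0 ∧ x ^ q = x⁻¹ := by
    intro x hx
    have hx0 : x ≠ 0 := by
      intro h; rw [h] at hx; simp at hx
    refine ⟨hx0, ?_⟩
    field_simp
    rw [pow_succ] at hx; exact hx
  obtain ⟨hu0, huq⟩ := hmem u hu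
  obtain ⟨hv0, hvq⟩ := hmem v hv
  have huv' : u - v ≠ 0 := sub_ne_zero.mpr huv
  have hvu' : v - u ≠ 0 := sub_ne_zero.mpr (Ne.symm huv)
  -- eval of B
  have hBev : ∀ x : F, B.eval x = a * (x + u) ^ n + b * (x + v) ^ n := by
    intro x; rw [hB]; simp
  -- key inequality, polynomial-free version of hab
  have epow : ∀ c : F, c ≠ 0 → c ^ (q - 1) = c ^ q / c := by
    intro c hc
    rw [eq_div_iff hc, ← pow_succ]
    congr 1; omega
  have hab2 : a * b ^ q * u ^ n ≠ a ^ q * b * v ^ n := by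
    intro h
    apply hab
    rw [epow _ (div_ne_zero hb ha), div_pow, div_pow]
    field_simp
    linear_combination h
  -- Frobenius is additive
  have haddq : ∀ x y : F, (x + y) ^ q = x ^ q + y ^ q := by
    intro x y
    rw [← hφdef, map_add, hφdef, hφdef]
  have hsum : ∀ x : F, x ^ (q + 1) = 1 → ∀ w : F, w ≠ 0 → w ^ (q + 1) = 1 →
      (x + w) ^ q = (x + w) / (x * w) := by
    intro x hx w hw0 hw
    obtain ⟨hx0, hxq⟩ := hmem x hx
    obtain ⟨-, hwq⟩ := hmem w hw
    rw [haddq, hxq, hwq]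
    field_simp
    ring
  have htq : ∀ x : F, x ^ (q + 1) = 1 → x + u ≠ 0 →
      ((x + v) / (x + u)) ^ q = ((x + v) / (x + u)) * (u / v) := by
    intro x hx hxu
    obtain ⟨hx0, -⟩ := hmem x hx
    rw [div_pow, hsum x hx v hv0 hv, hsum x hx u hu0 hu]
    field_simp
  -- B does not vanish on μ_{q+1}
  have hBne : ∀ x : F, x ^ (q + 1) = 1 → B.eval x ≠ 0 := by
    intro x hx hBx
    rw [hBev] at hBx
    obtain ⟨hx0, hxq⟩ := hmem x hx
    by_cases hxu : x + u = 0
    · have hxv : x + v ≠ 0 := by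
        intro h; exact huv (by linear_combination hxu - h)
      rw [hxu, zero_pow hn.ne', mul_zero, zero_add] at hBx
      exact (mul_ne_zero hb (pow_ne_zero n hxv)) hBx
    · have htn : ((x + v) / (x + u)) ^ n = -(a / b) := by
        rw [div_pow, div_eq_iff (pow_ne_zero _ hxu)]
        field_simp
        linear_combination hBx
      have h3 : (((x + v) / (x + u)) ^ n) ^ q = ((x + v) / (x + u)) ^ n * (u / v) ^ n := by
        rw [← pow_mul, mul_comm n q, pow_mul, htq x hx hxu, mul_pow]
      rw [htn] at h3
      have h4 : (-(a / b)) ^ q = -(a ^ q / b ^ q) := by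
        rw [← hφdef, map_neg, map_div₀, hφdef, hφdef]
      rw [h4] at h3
      apply hab2
      have e1 : a ^ q / b ^ q * (b ^ q * b * v ^ n) = a ^ q * b * v ^ n := by
        field_simp
      have e2 : a / b * (u / v) ^ n * (b ^ q * b * v ^ n) = a * b ^ q * u ^ n := by
        rw [div_pow]
        field_simp
      linear_combination (b ^ q * b * v ^ n) * h3 + e1 - e2
  -- injectivity core
  have hinj : ∀ x₁ : F, x₁ ^ (q + 1) = 1 → ∀ x₂ : F, x₂ ^ (q + 1) = 1 →
      (x₁ + u) ^ n * (x₂ + v) ^ n = (x₂ + u) ^ n * (x₁ + v) ^ n → x₁ = x₂ := by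
    intro x₁ hx1 x₂ hx2 hAC
    by_cases h1u : x₁ + u = 0
    · have h1v : x₁ + v ≠ 0 := by
        intro h; exact huv (by linear_combination h1u - h)
      have h0 : (x₂ + u) ^ n * (x₁ + v) ^ n = 0 := by
        rw [← hAC, h1u, zero_pow hn.ne', zero_mul]
      rcases mul_eq_zero.mp h0 with h | h
      · have h2u := pow_eq_zero_iff hn.ne' |>.mp h
        linear_combination h1u - h2u
      · exact absurd (pow_eq_zero_iff hn.ne' |>.mp h) h1v
    · by_cases h2u : x₂ + u = 0
      · have h2v : x₂ + v ≠ 0 := by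
          intro h; exact huv (by linear_combination h2u - h)
        have h0 : (x₁ + u) ^ n * (x₂ + v) ^ n = 0 := by
          rw [hAC, h2u, zero_pow hn.ne', zero_mul]
        rcases mul_eq_zero.mp h0 with h | h
        · exact absurd (pow_eq_zero_iff hn.ne' |>.mp h) h1u
        · exact absurd (pow_eq_zero_iff hn.ne' |>.mp h) h2v
      · set t₁ := (x₁ + v) / (x₁ + u) with ht1
        set t₂ := (x₂ + v) / (x₂ + u) with ht2
        have htt : t₁ ^ n = t₂ ^ n := by
          rw [ht1, ht2, div_pow, div_pow,
            div_eq_div_iff (pow_ne_zero _ h1u) (pow_ne_zero _ h2u)]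
          linear_combination -hAC
        by_cases h2v : x₂ + v = 0
        · have ht20 : t₂ = 0 := by rw [ht2, h2v, zero_div]
          have : t₁ = 0 := by
            have : t₁ ^ n = 0 := by rw [htt, ht20, zero_pow hn.ne']
            exact pow_eq_zero_iff hn.ne' |>.mp this
          have h1v : x₁ + v = 0 := by
            rcases div_eq_zero_iff.mp this with h | h
            · exact h
            · exact absurd h h1u
          linear_combination h1v - h2v
        · have ht2ne : t₂ ≠ 0 := div_ne_zero h2v h2u
          have hz0 : t₁ / t₂ ≠ 0 := by
            intro h
            have : (t₁ / t₂) ^ n = 1 := by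
              rw [div_pow, htt, div_self (pow_ne_zero _ ht2ne)]
            rw [h, zero_pow hn.ne'] at this
            exact zero_ne_one this
          have hzn : (t₁ / t₂) ^ n = 1 := by
            rw [div_pow, htt, div_self (pow_ne_zero _ ht2ne)]
          have hzq : (t₁ / t₂) ^ q = t₁ / t₂ := by
            rw [div_pow, htq x₁ hx1 h1u, htq x₂ hx2 h2u,
              mul_div_mul_right _ _ (div_ne_zero hu0 hv0)]
          have hzq1 : (t₁ / t₂) ^ (q - 1) = 1 := by
            rw [epow _ hz0, hzq, div_self hz0]
          have hz1 : t₁ / t₂ = 1 := by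
            have d1 : orderOf (t₁ / t₂) ∣ n := orderOf_dvd_of_pow_eq_one hzn
            have d2 : orderOf (t₁ / t₂) ∣ q - 1 := orderOf_dvd_of_pow_eq_one hzq1
            have hd := Nat.dvd_gcd d1 d2
            rw [hgcd, Nat.dvd_one] at hd
            exact orderOf_eq_one_iff.mp hd
          have htt2 : t₁ = t₂ := by
            field_simp at hz1
            exact hz1
          have hcr : (x₁ + v) * (x₂ + u) = (x₂ + v) * (x₁ + u) := by
            rw [ht1, ht2, div_eq_div_iff h1u h2u] at htt2
            exact htt2
          have h5 : (x₁ - x₂) * (u - v) = 0 := by linear_combination hcr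
          rcases mul_eq_zero.mp h5 with h | h
          · linear_combination h
          · exact absurd h huv'
  -- the value of mapq on μ
  have hmapq : ∀ x : F, x ^ (q + 1) = 1 → (mapq q B).eval x⁻¹ = (B.eval x) ^ q := by
    intro x hx
    obtain ⟨hx0, hxq⟩ := hmem x hx
    rw [← hxq, hqpj]
    exact mapq_eval_frob p j B x
  -- numerator formula
  have hPq : ∀ x : F, x ^ (q + 1) = 1 →
      u ^ n * v ^ n * (x ^ n * (B.eval x) ^ q) =
        a ^ q * v ^ n * (x + u) ^ n + b ^ q * u ^ n * (x + v) ^ n := by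
    intro x hx
    obtain ⟨hx0, hxq⟩ := hmem x hx
    have hq' : (B.eval x) ^ q
        = a ^ q * ((x + u) / (x * u)) ^ n + b ^ q * ((x + v) / (x * v)) ^ n := by
      rw [hBev, ← hφdef, map_add, map_mul, map_mul, map_pow, map_pow, hφdef, hφdef,
        hφdef, hφdef, hsum x hx u hu0 hu, hsum x hx v hv0 hv]
    rw [hq', div_pow, div_pow, mul_pow, mul_pow]
    field_simp
  -- maps to
  have hmaps : Set.MapsTo (fun x : F => x ^ n * (mapq q B).eval x⁻¹ / B.eval x)
      {x : F | x ^ (q + 1) = 1} {x : F | x ^ (q + 1) = 1} := by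
    intro x hx
    simp only [Set.mem_setOf_eq] at hx ⊢
    rw [hmapq x hx]
    have hy := hBne x hx
    have h1 : x ^ (n * (q + 1)) = 1 := by rw [mul_comm, pow_mul, hx, one_pow]
    have h2 : (B.eval x) ^ (q * (q + 1)) = (B.eval x) ^ (q + 1) := by
      have e : q * (q + 1) = q ^ 2 + q := by ring
      rw [e, pow_add, ← hF, FiniteField.pow_card, ← pow_succ']
    rw [div_pow, mul_pow, ← pow_mul, ← pow_mul, h1, one_mul, h2,
      div_self (pow_ne_zero _ hy)]
  -- conclude
  refine ((Set.toFinite _).injOn_iff_bijOn_of_mapsTo hmaps).mp ?_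
  intro x₁ hx1 x₂ hx2 hfe
  simp only [Set.mem_setOf_eq] at hx1 hx2
  simp only at hfe
  rw [hmapq x₁ hx1, hmapq x₂ hx2] at hfe
  have hy1 := hBne x₁ hx1
  have hy2 := hBne x₂ hx2
  rw [div_eq_div_iff hy1 hy2] at hfe
  have hP1 := hPq x₁ hx1
  have hP2 := hPq x₂ hx2
  have hcross : (a ^ q * v ^ n * (x₁ + u) ^ n + b ^ q * u ^ n * (x₁ + v) ^ n) * B.eval x₂
      = (a ^ q * v ^ n * (x₂ + u) ^ n + b ^ q * u ^ n * (x₂ + v) ^ n) * B.eval x₁ := by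
    rw [← hP1, ← hP2]
    linear_combination u ^ n * v ^ n * hfe
  rw [hBev x₁, hBev x₂] at hcross
  have h0 : ((x₁ + u) ^ n * (x₂ + v) ^ n - (x₂ + u) ^ n * (x₁ + v) ^ n)
      * (a ^ q * b * v ^ n - a * b ^ q * u ^ n) = 0 := by
    linear_combination hcross
  rcases mul_eq_zero.mp h0 with h | h
  · exact hinj x₁ hx1 x₂ hx2 (sub_eq_zero.mp h)
  · exact absurd (sub_eq_zero.mp h).symm hab2
end

section
/- Let n be a positive integer with gcd(n, q+1) = 1, and a, b, v ∈ F_{q²}* with v ∉ μ_{q+1} and bvⁿ/a ∉ μ_{q+1}. Set B(X) := a(X+v^{-q})ⁿ + b(X+v)ⁿ. Then the map x ↦ xⁿ B^{(q)}(1/x)/B(x) permutes μ_{q+1}. -/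
open Polynomial

theorem stmt16 (q : ℕ) (F : Type*) [Field F] [Fintype F]
    (hF : Fintype.card F = q ^ 2)
    (n : ℕ) (hn : 0 < n) (hgcd : Nat.gcd n (q + 1) = 1)
    (a b v : F) (ha : a ≠ 0) (hb : b ≠ 0) (hv : v ≠ 0)
    (hvμ : v ^ (q + 1) ≠ 1) (hab : (b * v ^ n / a) ^ (q + 1) ≠ 1)
    (B : F[X]) (hB : B = C a * (X + C (v ^ q)⁻¹) ^ n + C b * (X + C v) ^ n) :
    Set.BijOn (fun x : F => x ^ n * (mapq q B).eval x⁻¹ / B.eval x)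
      {x : F | x ^ (q + 1) = 1} {x : F | x ^ (q + 1) = 1} := by
  classical
  subst hB
  -- characteristic facts
  obtain ⟨p, hp⟩ := CharP.exists F
  haveI := hp
  have hprime : p.Prime := CharP.char_is_prime F p
  haveI := Fact.mk hprime
  obtain ⟨k, -, hcard⟩ := FiniteField.card F p
  obtain ⟨j, -, hq⟩ := (Nat.dvd_prime_pow hprime).mp
    (show q ∣ p ^ (k : ℕ) by rw [← hcard, hF]; exact dvd_pow_self q two_ne_zero)
  set φ := iterateFrobenius F p j with hφdef
  have hφ : ∀ y : F, φ y = y ^ q := fun y => by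
    rw [hφdef, iterateFrobenius_def, ← hq]
  have h2 : ∀ y : F, y ^ (q ^ 2) = y := fun y => by
    rw [← hF]; exact FiniteField.pow_card y
  have hm1 : (-1 : F) ^ q = -1 := by rw [← hφ, map_neg, map_one]
  have hneg : ∀ y : F, (-y) ^ (q + 1) = y ^ (q + 1) := fun y => by
    rw [neg_pow, pow_succ, hm1]; ring
  have hvq2 : (v ^ q) ^ q = v := by
    rw [← pow_mul, show q * q = q ^ 2 by ring]; exact h2 v
  have hvqne : v ^ q ≠ 0 := pow_ne_zero _ hv
  have hx0 : ∀ x : F, x ^ (q + 1) = 1 → x ≠ 0 := by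
    intro x hx h; rw [h] at hx; simp at hx
  have hxq : ∀ x : F, x ^ (q + 1) = 1 → x ^ q = x⁻¹ := by
    intro x hx
    exact eq_inv_of_mul_eq_one_right (by rw [← pow_succ']; exact hx)
  have ht : ∀ x : F, x ^ (q + 1) = 1 → x + v ≠ 0 := by
    intro x hx h
    apply hvμ
    rw [← hneg v, show -v = x from by linear_combination -h, hx]
  have hs : ∀ x : F, x ^ (q + 1) = 1 → x + (v ^ q)⁻¹ ≠ 0 := by
    intro x hx h
    have h1 : ((v ^ q)⁻¹) ^ (q + 1) = 1 := by
      rw [← hneg, show -(v ^ q)⁻¹ = x from by linear_combination -h, hx]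
    rw [inv_pow, inv_eq_one] at h1
    apply hvμ
    have e : (v ^ q) ^ (q + 1) = v ^ (q + 1) := by
      rw [← pow_mul, show q * (q + 1) = q ^ 2 + q by ring, pow_add, h2 v, ← pow_succ']
    rw [← e]; exact h1
  have htq : ∀ x : F, x ^ (q + 1) = 1 → (x + v) ^ q = x⁻¹ + v ^ q := by
    intro x hx
    rw [← hφ, map_add, hφ, hφ, hxq x hx]
  have hsq : ∀ x : F, x ^ (q + 1) = 1 → (x + (v ^ q)⁻¹) ^ q = x⁻¹ + v⁻¹ := by
    intro x hx
    rw [← hφ, map_add, map_inv₀, hφ, hφ, hxq x hx, hvq2]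
  have hts : ∀ x : F, x ^ (q + 1) = 1 →
      (x + v) ^ (q + 1) = v ^ (q + 1) * (x + (v ^ q)⁻¹) ^ (q + 1) := by
    intro x hx
    rw [pow_succ (x + v) q, htq x hx, pow_succ (x + (v ^ q)⁻¹) q, hsq x hx]
    have hxne := hx0 x hx
    field_simp
    ring
  -- evaluation of B
  have hE : ∀ x : F,
      (C a * (X + C (v ^ q)⁻¹) ^ n + C b * (X + C v) ^ n).eval x
        = a * (x + (v ^ q)⁻¹) ^ n + b * (x + v) ^ n := by
    intro x; simp
  -- mapq and frobenius
  have hmapq : ∀ (P : F[X]) (x : F), (mapq q P).eval (x ^ q) = (P.eval x) ^ q := by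
    intro P x
    have h1 : mapq q P = P.map φ := by
      unfold mapq
      rw [show P.map φ = P.eval₂ (C.comp φ) X from rfl, eval₂_eq_sum]
      simp only [RingHom.coe_comp, Function.comp_apply, hφ]
    rw [h1, ← hφ x, Polynomial.eval_map, Polynomial.eval₂_at_apply, hφ]
  -- the key nonvanishing coming from hab
  have hkey : b ^ (q + 1) * (v ^ n) ^ (q + 1) ≠ a ^ (q + 1) := by
    intro h
    apply hab
    rw [div_pow, mul_pow, h, div_self (pow_ne_zero _ ha)]
  -- denominator nonzero on μ
  have hD : ∀ x : F, x ^ (q + 1) = 1 → a * (x + (v ^ q)⁻¹) ^ n + b * (x + v) ^ n ≠ 0 := by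
    intro x hx h
    have hsne := hs x hx
    have h' : b * (x + v) ^ n = -(a * (x + (v ^ q)⁻¹) ^ n) := by linear_combination h
    have h2' : (b * (x + v) ^ n) ^ (q + 1) = (a * (x + (v ^ q)⁻¹) ^ n) ^ (q + 1) := by
      rw [h']; exact hneg _
    rw [mul_pow, mul_pow] at h2'
    have h3 : ((x + v) ^ n) ^ (q + 1)
        = (v ^ n) ^ (q + 1) * ((x + (v ^ q)⁻¹) ^ n) ^ (q + 1) := by
      rw [pow_right_comm, hts x hx, mul_pow, pow_right_comm v, pow_right_comm (x + (v ^ q)⁻¹)]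
    rw [h3, ← mul_assoc] at h2'
    exact hkey (mul_right_cancel₀ (pow_ne_zero _ (pow_ne_zero _ hsne)) h2')
  -- value formula on μ
  have hval : ∀ x : F, x ^ (q + 1) = 1 →
      x ^ n * (mapq q (C a * (X + C (v ^ q)⁻¹) ^ n + C b * (X + C v) ^ n)).eval x⁻¹
        / (C a * (X + C (v ^ q)⁻¹) ^ n + C b * (X + C v) ^ n).eval x
      = (a ^ q * (v⁻¹) ^ n * (x + v) ^ n + b ^ q * (v ^ q) ^ n * (x + (v ^ q)⁻¹) ^ n)
        / (a * (x + (v ^ q)⁻¹) ^ n + b * (x + v) ^ n) := by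
    intro x hx
    have hxne := hx0 x hx
    rw [← hxq x hx, hmapq, hE]
    congr 1
    have hfrob : (a * (x + (v ^ q)⁻¹) ^ n + b * (x + v) ^ n) ^ q
        = a ^ q * (x⁻¹ + v⁻¹) ^ n + b ^ q * (x⁻¹ + v ^ q) ^ n := by
      rw [← hφ, map_add, map_mul, map_mul, map_pow, map_pow, hφ, hφ, hφ, hφ,
        hsq x hx, htq x hx]
    rw [hfrob]
    have e1 : x ^ n * (x⁻¹ + v⁻¹) ^ n = (v⁻¹) ^ n * (x + v) ^ n := by
      rw [← mul_pow, ← mul_pow]; congr 1; field_simp; ring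
    have e2 : x ^ n * (x⁻¹ + v ^ q) ^ n = (v ^ q) ^ n * (x + (v ^ q)⁻¹) ^ n := by
      rw [← mul_pow, ← mul_pow]; congr 1; field_simp; ring
    linear_combination a ^ q * e1 + b ^ q * e2
  -- maps-to
  have hmaps : ∀ x : F, x ^ (q + 1) = 1 →
      (x ^ n * (mapq q (C a * (X + C (v ^ q)⁻¹) ^ n + C b * (X + C v) ^ n)).eval x⁻¹
        / (C a * (X + C (v ^ q)⁻¹) ^ n + C b * (X + C v) ^ n).eval x) ^ (q + 1) = 1 := by
    intro x hx
    rw [← hxq x hx, hmapq]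
    set c := (C a * (X + C (v ^ q)⁻¹) ^ n + C b * (X + C v) ^ n).eval x with hc
    have hc0 : c ≠ 0 := by rw [hc, hE]; exact hD x hx
    have e1 : (x ^ n) ^ (q + 1) = 1 := by rw [pow_right_comm, hx, one_pow]
    have e2 : (c ^ q) ^ (q + 1) = c ^ (q + 1) := by
      rw [← pow_mul, show q * (q + 1) = q ^ 2 + q by ring, pow_add, h2 c, ← pow_succ']
    rw [div_pow, mul_pow, e1, e2, one_mul, div_self (pow_ne_zero _ hc0)]
  -- Bezout
  have hbez : ∀ z : F, z ≠ 0 → z ^ n = 1 → z ^ (q + 1) = 1 → z = 1 := by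
    intro z hz h1 h2'
    have h3 := Nat.gcd_eq_gcd_ab n (q + 1)
    rw [hgcd, Nat.cast_one] at h3
    have : z ^ (1 : ℤ) = 1 := by
      rw [h3, zpow_add₀ hz, zpow_mul, zpow_mul, zpow_natCast, zpow_natCast, h1, h2',
        one_zpow, one_zpow, one_mul]
    simpa using this
  -- injectivity
  have hinj : ∀ x1 : F, x1 ^ (q + 1) = 1 → ∀ x2 : F, x2 ^ (q + 1) = 1 →
      (a ^ q * (v⁻¹) ^ n * (x1 + v) ^ n + b ^ q * (v ^ q) ^ n * (x1 + (v ^ q)⁻¹) ^ n)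
        / (a * (x1 + (v ^ q)⁻¹) ^ n + b * (x1 + v) ^ n)
      = (a ^ q * (v⁻¹) ^ n * (x2 + v) ^ n + b ^ q * (v ^ q) ^ n * (x2 + (v ^ q)⁻¹) ^ n)
        / (a * (x2 + (v ^ q)⁻¹) ^ n + b * (x2 + v) ^ n) → x1 = x2 := by
    intro x1 hx1 x2 hx2 heq
    rw [div_eq_div_iff (hD x1 hx1) (hD x2 hx2)] at heq
    have hK : ((x1 + v) ^ n * (x2 + (v ^ q)⁻¹) ^ n - (x2 + v) ^ n * (x1 + (v ^ q)⁻¹) ^ n)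
        * (a ^ (q + 1) * (v⁻¹) ^ n - b ^ (q + 1) * (v ^ q) ^ n) = 0 := by
      linear_combination heq
    have hK2 : a ^ (q + 1) * (v⁻¹) ^ n - b ^ (q + 1) * (v ^ q) ^ n ≠ 0 := by
      intro h0
      apply hkey
      have h0' : a ^ (q + 1) * (v⁻¹) ^ n = b ^ (q + 1) * (v ^ q) ^ n := by
        linear_combination h0
      have hv1 : (v⁻¹) ^ n * v ^ n = 1 := by
        rw [← mul_pow, inv_mul_cancel₀ hv, one_pow]
      calc b ^ (q + 1) * (v ^ n) ^ (q + 1)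
          = b ^ (q + 1) * (v ^ q) ^ n * v ^ n := by
            have e : (v ^ n) ^ (q + 1) = (v ^ q) ^ n * v ^ n := by
              rw [pow_right_comm, pow_succ, mul_pow]
            rw [e]; ring
        _ = a ^ (q + 1) * (v⁻¹) ^ n * v ^ n := by rw [h0']
        _ = a ^ (q + 1) := by rw [mul_assoc, hv1, mul_one]
    have hTS : (x1 + v) ^ n * (x2 + (v ^ q)⁻¹) ^ n
        = (x2 + v) ^ n * (x1 + (v ^ q)⁻¹) ^ n := by
      rcases mul_eq_zero.mp hK with h | h
      · linear_combination h
      · exact absurd h hK2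
    have hden : (x2 + v) * (x1 + (v ^ q)⁻¹) ≠ 0 :=
      mul_ne_zero (ht x2 hx2) (hs x1 hx1)
    set z : F := ((x1 + v) * (x2 + (v ^ q)⁻¹)) / ((x2 + v) * (x1 + (v ^ q)⁻¹)) with hz
    have hz0 : z ≠ 0 :=
      div_ne_zero (mul_ne_zero (ht x1 hx1) (hs x2 hx2)) hden
    have hzn : z ^ n = 1 := by
      rw [hz, div_pow, mul_pow, mul_pow, hTS, div_self]
      exact mul_ne_zero (pow_ne_zero _ (ht x2 hx2)) (pow_ne_zero _ (hs x1 hx1))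
    have hzq : z ^ (q + 1) = 1 := by
      rw [hz, div_pow, mul_pow, mul_pow, hts x1 hx1, hts x2 hx2,
        show v ^ (q + 1) * (x1 + (v ^ q)⁻¹) ^ (q + 1) * (x2 + (v ^ q)⁻¹) ^ (q + 1)
          = v ^ (q + 1) * (x2 + (v ^ q)⁻¹) ^ (q + 1) * (x1 + (v ^ q)⁻¹) ^ (q + 1) by ring,
        div_self]
      exact mul_ne_zero (mul_ne_zero (pow_ne_zero _ hv) (pow_ne_zero _ (hs x2 hx2)))
        (pow_ne_zero _ (hs x1 hx1))
    have hz1 : z = 1 := hbez z hz0 hzn hzq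
    have hcross : (x1 + v) * (x2 + (v ^ q)⁻¹) = (x2 + v) * (x1 + (v ^ q)⁻¹) := by
      have := (div_eq_one_iff_eq hden).mp hz1
      exact this
    have hvv : (v ^ q)⁻¹ - v ≠ 0 := by
      intro h0
      apply hvμ
      have h0' : (v ^ q)⁻¹ = v := by linear_combination h0
      have e : v ^ (q + 1) = v ^ q * (v ^ q)⁻¹ := by rw [pow_succ, h0']
      rw [e, mul_inv_cancel₀ hvqne]
    have hfin : (x1 - x2) * ((v ^ q)⁻¹ - v) = 0 := by linear_combination hcross
    rcases mul_eq_zero.mp hfin with h | h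
    · linear_combination h
    · exact absurd h hvv
  -- assemble
  have hfinS : ({x : F | x ^ (q + 1) = 1} : Set F).Finite := Set.toFinite _
  have hmapsTo : Set.MapsTo
      (fun x : F => x ^ n * (mapq q (C a * (X + C (v ^ q)⁻¹) ^ n + C b * (X + C v) ^ n)).eval x⁻¹
        / (C a * (X + C (v ^ q)⁻¹) ^ n + C b * (X + C v) ^ n).eval x)
      {x : F | x ^ (q + 1) = 1} {x : F | x ^ (q + 1) = 1} := by
    intro x hx
    simp only [Set.mem_setOf_eq] at hx ⊢
    exact hmaps x hx
  refine (hfinS.injOn_iff_bijOn_of_mapsTo hmapsTo).mp ?_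
  intro x1 h1 x2 h2' heq
  simp only [Set.mem_setOf_eq] at h1 h2'
  simp only at heq
  rw [hval x1 h1, hval x2 h2'] at heq
  exact hinj x1 h1 x2 h2' heq
end
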